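/- Under the assumptions of the one-sided dilation formulas for a nondecreasing, locally concave signal u : ℤ → ℝ, the increments of the dilated signals satisfy δ_{2r}[u]_i − δ_{2r}[u]_{i−1} ≤ δ_r[u]_i − δ_r[u]_{i−1}, provided 0 < r ≤ h. -/

import Mathlib

/-!
Write `t = r / h ∈ (0, 1]` and `Δⱼ = u (j + 1) - u j`. The increment of `δ_r[u]` at `i` exceeds
that of `δ_{2r}[u]` by `t (1 - t) (Δᵢ₋₁ - Δᵢ) + t² (Δᵢ - Δᵢ₊₁)`, and both terms are nonnegative
because the increments of a concave signal decrease.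
-/

/-- The one-sided dilation `δ_r[u]`. -/
noncomputable def dilation (u : ℤ → ℝ) (r h : ℝ) (i : ℤ) : ℝ :=
  u i + (r / h) * (u (i + 1) - u i)

/-- The one-sided dilation `δ_{2r}[u]`. -/
noncomputable def dilationTwice (u : ℤ → ℝ) (r h : ℝ) (i : ℤ) : ℝ :=
  u i + (2 * r / h) * (u (i + 1) - u i) + (r ^ 2 / h ^ 2) * (u (i + 2) - 2 * u (i + 1) + u i)

theorem dilation_sub_sub_dilationTwice_sub (u : ℤ → ℝ) (r h : ℝ) (i : ℤ) :
    (dilation u r h i - dilation u r h (i - 1))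
        - (dilationTwice u r h i - dilationTwice u r h (i - 1))
      = r / h * (1 - r / h) * ((u i - u (i - 1)) - (u (i + 1) - u i))
        + (r / h) ^ 2 * ((u (i + 1) - u i) - (u (i + 2) - u (i + 1))) := by
  simp only [dilation, dilationTwice, sub_add_cancel, show i - 1 + 2 = i + 1 by ring]
  ring

theorem dilationTwice_sub_le_dilation_sub {u : ℤ → ℝ}
    (hconc : ∀ j : ℤ, u (j + 1) - u j ≤ u j - u (j - 1)) {r h : ℝ}
    (ht₀ : 0 ≤ r / h) (ht₁ : r / h ≤ 1) (i : ℤ) :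
    dilationTwice u r h i - dilationTwice u r h (i - 1)
      ≤ dilation u r h i - dilation u r h (i - 1) := by
  have hΔ₀ := hconc i
  have hΔ₁ : u (i + 2) - u (i + 1) ≤ u (i + 1) - u i := by
    simpa only [add_sub_cancel_right, add_assoc, one_add_one_eq_two] using hconc (i + 1)
  rw [← sub_nonneg, dilation_sub_sub_dilationTwice_sub]
  exact add_nonneg (mul_nonneg (mul_nonneg ht₀ (sub_nonneg.2 ht₁)) (sub_nonneg.2 hΔ₀))
    (mul_nonneg (sq_nonneg _) (sub_nonneg.2 hΔ₁))

theorem dilated_increments_ordered_general (u : ℤ → ℝ)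
    (hconc : ∀ j : ℤ, u (j + 1) - u j ≤ u j - u (j - 1))
    (r h : ℝ) (hh : 0 < h) (hr : 0 < r) (hrh : r ≤ h) (i : ℤ) :
    (u i + (2 * r / h) * (u (i + 1) - u i)
        + (r ^ 2 / h ^ 2) * (u (i + 2) - 2 * u (i + 1) + u i))
      - (u (i - 1) + (2 * r / h) * (u i - u (i - 1))
        + (r ^ 2 / h ^ 2) * (u (i + 1) - 2 * u i + u (i - 1)))
      ≤ (u i + (r / h) * (u (i + 1) - u i))
        - (u (i - 1) + (r / h) * (u i - u (i - 1))) := by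
  have key := dilationTwice_sub_le_dilation_sub hconc (div_nonneg hr.le hh.le)
    ((div_le_one hh).2 hrh) i
  simpa only [dilation, dilationTwice, sub_add_cancel, show i - 1 + 2 = i + 1 by ring] using key

/-- For a nondecreasing, locally concave signal, the increments of the
dilated signals satisfy
`δ_{2r}[u]_i − δ_{2r}[u]_{i−1} ≤ δ_r[u]_i − δ_r[u]_{i−1}`. -/
theorem dilated_increments_ordered (u : ℤ → ℝ)
    (hmono : ∀ j : ℤ, u (j - 1) ≤ u j)
    (hconc : ∀ j : ℤ, u (j + 1) - u j ≤ u j - u (j - 1))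
    (r h : ℝ) (hh : 0 < h) (hr : 0 < r) (hrh : r ≤ h) (i : ℤ) :
    (u i + (2 * r / h) * (u (i + 1) - u i)
        + (r ^ 2 / h ^ 2) * (u (i + 2) - 2 * u (i + 1) + u i))
      - (u (i - 1) + (2 * r / h) * (u i - u (i - 1))
        + (r ^ 2 / h ^ 2) * (u (i + 1) - 2 * u i + u (i - 1)))
      ≤ (u i + (r / h) * (u (i + 1) - u i))
        - (u (i - 1) + (r / h) * (u i - u (i - 1))) :=
  dilated_increments_ordered_general u hconc r h hh hr hrh i
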